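/- The coefficients of Markov–Fibonacci polynomials are log-concave along all three principal directions of the Newton polygon: for every n ≥ 0 and all integers i, j, the coefficients A_{i,j} = A_{i,j}(n+1) of Q_{n+1} (set to 0 outside the support) satisfy A_{i,j}^2 ≥ A_{i−1,j}·A_{i+1,j} (horizontal), A_{i,j}^2 ≥ A_{i,j−1}·A_{i,j+1} (vertical), and A_{i,j}^2 ≥ A_{i−1,j+1}·A_{i+1,j−1} (diagonal, along i+j constant). -/
import Mathlib


open MvPolynomial

/-- The Markov–Fibonacci numerator polynomials `Q n ∈ ℤ[u,v,w]` (with `u = X 0`,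
`v = X 1`, `w = X 2`), defined by `Q 0 = 1`, `Q 1 = u + v` and
`Q (n+2) = (u+v+w)·Q (n+1) - v·w·Q n`. `Q n` is the numerator of the Markov
polynomial `M_{1/n}`. -/
-- log-concavity of binomials along a row
lemma lc1 (m k : ℕ) : m.choose k * m.choose (k+2) ≤ m.choose (k+1)^2 := by
  have h1 := Nat.choose_succ_right_eq m k
  have h2 := Nat.choose_succ_right_eq m (k+1)
  have key : m.choose k * m.choose (k+2) * ((k+1)*(k+2)) ≤ m.choose (k+1)^2 * ((k+1)*(k+2)) := by
    calc m.choose k * m.choose (k+2) * ((k+1)*(k+2))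
        = m.choose k * (m.choose (k+1+1) * (k+1+1)) * (k+1) := by ring
      _ = m.choose k * (m.choose (k+1) * (m - (k+1))) * (k+1) := by rw [h2]
      _ = (m.choose (k+1) * (k+1)) * (m.choose k * (m-(k+1))) := by ring
      _ = (m.choose k * (m-k)) * (m.choose k * (m-(k+1))) := by rw [h1]
      _ ≤ (m.choose k * (m-k)) * (m.choose k * (m-k)) :=
          Nat.mul_le_mul_left _ (Nat.mul_le_mul_left _ (Nat.sub_le_sub_left (Nat.le_succ k) m))
      _ = (m.choose (k+1) * (k+1)) * (m.choose (k+1) * (k+1)) := by rw [h1]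
      _ = m.choose (k+1)^2 * ((k+1)*(k+1)) := by ring
      _ ≤ m.choose (k+1)^2 * ((k+1)*(k+2)) :=
          Nat.mul_le_mul_left _ (Nat.mul_le_mul_left _ (Nat.le_succ (k+1)))
  exact Nat.le_of_mul_le_mul_right key (by positivity)

-- log-concavity of binomials along a column (varying top)
lemma lc2 (m r : ℕ) : m.choose r * (m+2).choose r ≤ (m+1).choose r ^ 2 := by
  rcases le_or_gt r (m+1) with hr | hr
  · have h1 := Nat.choose_mul_succ_eq m r
    have h2 := Nat.choose_mul_succ_eq (m+1) r
    have key : m.choose r * (m+2).choose r * ((m+1)*(m+2-r)) ≤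
        (m+1).choose r ^ 2 * ((m+1)*(m+2-r)) := by
      calc m.choose r * (m+2).choose r * ((m+1)*(m+2-r))
          = (m.choose r * (m+1)) * ((m+1+1).choose r * (m+1+1-r)) := by ring
        _ = ((m+1).choose r * (m+1-r)) * ((m+1).choose r * (m+1+1)) := by rw [h1, ← h2]
        _ = (m+1).choose r ^2 * ((m+1-r)*(m+2)) := by ring
        _ ≤ (m+1).choose r ^2 * ((m+2-r)*(m+1)) := by
            refine Nat.mul_le_mul_left _ ?_
            have e : m+2-r = (m+1-r)+1 := by omega
            rw [e]
            nlinarith [Nat.sub_le (m+1) r]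
        _ = (m+1).choose r ^2 * ((m+1)*(m+2-r)) := by ring
    exact Nat.le_of_mul_le_mul_right key (Nat.mul_pos (Nat.succ_pos m) (by omega))
  · have : m.choose r = 0 := Nat.choose_eq_zero_of_lt (by omega)
    simp [this]

-- log-concavity along the other diagonal
lemma lc3 (m r : ℕ) : m.choose r * (m+2).choose (r+2) ≤ (m+1).choose (r+1) ^ 2 := by
  rcases le_or_gt r m with hr | hr
  · have e1 : m.choose r = m.choose (m - r) := by
      rw [Nat.choose_symm hr]
    have e2 : (m+2).choose (r+2) = (m+2).choose (m - r) := by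
      have : m + 2 - (r+2) = m - r := by omega
      rw [← this, Nat.choose_symm (by omega)]
    have e3 : (m+1).choose (r+1) = (m+1).choose (m - r) := by
      have : m + 1 - (r+1) = m - r := by omega
      rw [← this, Nat.choose_symm (by omega)]
    rw [e1, e2, e3]
    exact lc2 m (m - r)
  · have : m.choose r = 0 := Nat.choose_eq_zero_of_lt hr
    simp [this]

noncomputable def Q : ℕ → MvPolynomial (Fin 3) ℤ
  | 0 => 1
  | 1 => X 0 + X 1
  | (n + 2) => (X 0 + X 1 + X 2) * Q (n + 1) - X 1 * X 2 * Q n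

/-- closed form for the coefficients of `Q`. -/
def Fc : ℕ → ℕ → ℕ → ℕ
  | N, 0, j => if j = N then 1 else 0
  | N, (i+1), j => (i+1+j).choose j * (N-1-j).choose i

/-- the monomial `u^i v^j w^l` as a `Finsupp`. -/
noncomputable def mm (i j l : ℕ) : Fin 3 →₀ ℕ :=
  Finsupp.single 0 i + Finsupp.single 1 j + Finsupp.single 2 l

lemma mm_u (i j l : ℕ) : mm (i+1) j l = Finsupp.single 0 1 + mm i j l := by
  simp only [mm, Finsupp.single_add]; abel

lemma mm_v (i j l : ℕ) : mm i (j+1) l = Finsupp.single 1 1 + mm i j l := by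
  simp only [mm, Finsupp.single_add]; abel

lemma mm_w (i j l : ℕ) : mm i j (l+1) = Finsupp.single 2 1 + mm i j l := by
  simp only [mm, Finsupp.single_add]; abel

lemma mm_apply_u (i j l : ℕ) : mm i j l 0 = i := by
  simp [mm, Finsupp.single_apply]

lemma mm_apply_v (i j l : ℕ) : mm i j l 1 = j := by
  simp [mm, Finsupp.single_apply]

lemma mm_apply_w (i j l : ℕ) : mm i j l 2 = l := by
  simp [mm, Finsupp.single_apply]

lemma coeff_u_mul (i j l : ℕ) (p : MvPolynomial (Fin 3) ℤ) :
    coeff (mm (i+1) j l) (X 0 * p) = coeff (mm i j l) p := by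
  rw [mm_u]; exact coeff_X_mul _ _ _

lemma coeff_v_mul (i j l : ℕ) (p : MvPolynomial (Fin 3) ℤ) :
    coeff (mm i (j+1) l) (X 1 * p) = coeff (mm i j l) p := by
  rw [mm_v]; exact coeff_X_mul _ _ _

lemma coeff_w_mul (i j l : ℕ) (p : MvPolynomial (Fin 3) ℤ) :
    coeff (mm i j (l+1)) (X 2 * p) = coeff (mm i j l) p := by
  rw [mm_w]; exact coeff_X_mul _ _ _

lemma coeff_u_mul0 (j l : ℕ) (p : MvPolynomial (Fin 3) ℤ) :
    coeff (mm 0 j l) (X 0 * p) = 0 := by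
  rw [coeff_X_mul']
  simp [Finsupp.mem_support_iff, mm_apply_u]

lemma coeff_v_mul0 (i l : ℕ) (p : MvPolynomial (Fin 3) ℤ) :
    coeff (mm i 0 l) (X 1 * p) = 0 := by
  rw [coeff_X_mul']
  simp [Finsupp.mem_support_iff, mm_apply_v]

lemma coeff_w_mul0 (i j : ℕ) (p : MvPolynomial (Fin 3) ℤ) :
    coeff (mm i j 0) (X 2 * p) = 0 := by
  rw [coeff_X_mul']
  simp [Finsupp.mem_support_iff, mm_apply_w]

lemma coeff_Q : ∀ n i j l, i + j + l = n → coeff (mm i j l) (Q n) = (Fc n i j : ℤ) := by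
  intro n
  induction n using Nat.strong_induction_on with
  | _ n IH =>
  match n with
  | 0 =>
    intro i j l h
    obtain ⟨rfl, rfl, rfl⟩ : i = 0 ∧ j = 0 ∧ l = 0 := by omega
    show coeff (mm 0 0 0) 1 = _
    have h0 : mm 0 0 0 = 0 := by simp [mm]
    rw [coeff_one, h0]
    simp [Fc]
  | 1 =>
    intro i j l h
    show coeff (mm i j l) (X 0 + X 1) = _
    rw [coeff_add, coeff_X', coeff_X']
    rcases i with _ | _ | i
    · rcases j with _ | _ | j
      · obtain rfl : l = 1 := by omega
        norm_num [mm, Fc, Finsupp.single_eq_single_iff, Fin.ext_iff]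
      · obtain rfl : l = 0 := by omega
        norm_num [mm, Fc, Finsupp.single_eq_single_iff, Fin.ext_iff]
      · omega
    · obtain ⟨rfl, rfl⟩ : j = 0 ∧ l = 0 := by omega
      norm_num [mm, Fc, Finsupp.single_eq_single_iff, Fin.ext_iff]
    · omega
  | (n+2) =>
    intro i j l h
    show coeff (mm i j l) ((X 0 + X 1 + X 2) * Q (n+1) - X 1 * X 2 * Q n) = _
    rw [coeff_sub, add_mul, add_mul, coeff_add, coeff_add, mul_assoc]
    have IH1 := IH (n+1) (by omega)
    have IH0 := IH n (by omega)
    rcases j with _ | j <;> rcases l with _ | l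
    · -- j = 0, l = 0 : i = n+2
      obtain rfl : i = n + 2 := by omega
      rw [coeff_v_mul0, coeff_w_mul0, coeff_v_mul0,
        show (n+2) = (n+1)+1 from rfl, coeff_u_mul,
        IH1 (n+1) 0 0 (by omega)]
      have e1 : n + 1 + 1 - 1 - 0 = n + 1 := by omega
      simp [Fc, e1]
    · -- j = 0, l = l+1 : i + l + 1 = n + 1... i + 0 + (l+1) = n+2
      rcases i with _ | i
      · rw [coeff_u_mul0, coeff_v_mul0, coeff_v_mul0, coeff_w_mul,
          IH1 0 0 l (by omega)]
        simp [Fc]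
      · rw [coeff_u_mul, coeff_v_mul0, coeff_v_mul0, coeff_w_mul,
          IH1 i 0 (l+1) (by omega), IH1 (i+1) 0 l (by omega)]
        rcases i with _ | i
        · simp [Fc]
        · simp only [Fc, Nat.choose_zero_right, one_mul]
          have e1 : n + 1 - 1 - 0 = n := by omega
          have e2 : n + 2 - 1 - 0 = n + 1 := by omega
          rw [e1, e2, Nat.choose_succ_succ' n i]
          push_cast; ring
    · -- j = j+1, l = 0
      rcases i with _ | i
      · rw [coeff_u_mul0, coeff_w_mul0, coeff_v_mul, coeff_v_mul,
          IH1 0 j 0 (by omega), coeff_w_mul0]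
        obtain rfl : j = n + 1 := by omega
        simp [Fc]
      · rw [coeff_u_mul, coeff_w_mul0, coeff_v_mul, coeff_v_mul,
          IH1 i (j+1) 0 (by omega), IH1 (i+1) j 0 (by omega), coeff_w_mul0]
        rcases i with _ | i
        · obtain rfl : n = j := by omega
          have c1 : (1+n).choose n = n+1 := by
            rw [Nat.add_comm]; exact Nat.choose_succ_self_right n
          have c2 : (2+n).choose (n+1) = n+2 := by
            rw [show 2+n = (n+1)+1 by omega]
            exact Nat.choose_succ_self_right (n+1)
          simp [Fc, c1]
          rw [show 1+(n+1) = 2+n by omega, c2]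
          push_cast; ring
        · obtain rfl : n = i + 1 + j := by omega
          simp only [Fc]
          have e1 : i+1+j+1-1-(j+1) = i := by omega
          have e2 : i+1+j+1-1-j = i+1 := by omega
          have e3 : i+1+j+2-1-(j+1) = i+1 := by omega
          have ea : i+1+(j+1) = i+j+2 := by omega
          have eb : i+1+1+j = i+j+2 := by omega
          have ec : i+1+1+(j+1) = (i+j+2)+1 := by omega
          rw [e1, e2, e3, ea, eb, ec, Nat.choose_succ_succ' (i+j+2) j]
          simp [Nat.choose_self]
          ring
    · -- j = j+1, l = l+1
      rcases i with _ | i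
      · rw [coeff_u_mul0, coeff_v_mul, coeff_w_mul, coeff_v_mul, coeff_w_mul,
          IH1 0 j (l+1) (by omega), IH1 0 (j+1) l (by omega), IH0 0 j l (by omega)]
        simp only [Fc]
        rw [if_neg (by omega : ¬ j = n+1), if_neg (by omega : ¬ (j+1) = n+2)]
        by_cases hn : j = n
        · simp [hn]
        · rw [if_neg (by omega : ¬ (j+1) = n+1), if_neg hn]
          simp
      · rw [coeff_u_mul, coeff_v_mul, coeff_w_mul, coeff_v_mul, coeff_w_mul,
          IH1 i (j+1) (l+1) (by omega), IH1 (i+1) j (l+1) (by omega),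
          IH1 (i+1) (j+1) l (by omega), IH0 (i+1) j l (by omega)]
        rcases i with _ | i
        · -- i = 1 case
          obtain rfl : n = j + l + 1 := by omega
          simp only [Fc, Nat.choose_zero_right, mul_one]
          rw [if_neg (by omega : ¬ j+1 = j+l+1+1)]
          push_cast; ring
        · -- generic case, double Pascal
          obtain rfl : n = i + j + l + 2 := by omega
          simp only [Fc]
          rw [show i+j+l+2+1-1-(j+1) = i+l+1 by omega,
            show i+j+l+2+1-1-j = i+l+2 by omega,
            show i+j+l+2-1-j = i+l+1 by omega,
            show i+j+l+2+2-1-(j+1) = i+l+2 by omega,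
            show i+1+(j+1) = i+j+2 by omega,
            show i+1+1+j = i+j+2 by omega,
            show i+1+1+(j+1) = (i+j+2)+1 by omega,
            show i+l+2 = (i+l+1)+1 by omega,
            Nat.choose_succ_succ' (i+j+2) j,
            Nat.choose_succ_succ' (i+l+1) i]
          push_cast; ring


/-- `fibCoeff n i j` is the coefficient `A_{i,j}(n)` of `u^i v^j w^(n-i-j)` in `Q n`,
extended by `0` outside the range `i ≥ 0`, `j ≥ 0`, `i + j ≤ n`. -/
noncomputable def fibCoeff (n : ℕ) (i j : ℤ) : ℤ :=
  if 0 ≤ i ∧ 0 ≤ j ∧ i + j ≤ n then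
    MvPolynomial.coeff
      (Finsupp.single 0 i.toNat + Finsupp.single 1 j.toNat +
        Finsupp.single 2 (n - i.toNat - j.toNat)) (Q n)
  else 0

/-- The coefficients of the Markov–Fibonacci polynomial `Q (n+1)` are log-concave in
the horizontal, vertical and diagonal directions of its Newton polygon. -/
lemma fibCoeff_eq {N : ℕ} {i j : ℤ} (h1 : 0 ≤ i) (h2 : 0 ≤ j) (h3 : i + j ≤ N) :
    fibCoeff N i j = (Fc N i.toNat j.toNat : ℤ) := by
  rw [fibCoeff, if_pos ⟨h1, h2, h3⟩]
  exact coeff_Q N _ _ _ (by omega)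

lemma fibCoeff_zero {N : ℕ} {i j : ℤ} (h : ¬(0 ≤ i ∧ 0 ≤ j ∧ i + j ≤ N)) :
    fibCoeff N i j = 0 := if_neg h

lemma dom_of_ne {N : ℕ} {i j : ℤ} (h : fibCoeff N i j ≠ 0) :
    0 ≤ i ∧ 0 ≤ j ∧ i + j ≤ N := by
  by_contra hc
  exact h (fibCoeff_zero hc)

lemma choose_flip (k l : ℕ) : (k+l).choose k = (k+l).choose l := by
  have h := Nat.choose_symm (show k ≤ k+l by omega)
  rw [show k+l-k = l by omega] at h
  exact h.symm

lemma part1 (N : ℕ) (i j : ℤ) :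
    fibCoeff N (i-1) j * fibCoeff N (i+1) j ≤ fibCoeff N i j ^ 2 := by
  by_cases hL : fibCoeff N (i-1) j = 0
  · rw [hL, zero_mul]; exact sq_nonneg _
  by_cases hR : fibCoeff N (i+1) j = 0
  · rw [hR, mul_zero]; exact sq_nonneg _
  obtain ⟨hL1, hL2, hL3⟩ := dom_of_ne hL
  obtain ⟨hR1, hR2, hR3⟩ := dom_of_ne hR
  have hi2 : 2 ≤ i := by
    by_contra h'
    have hi1 : i = 1 := by omega
    subst hi1
    rw [fibCoeff_eq hL1 hL2 hL3] at hL
    simp only [show ((1:ℤ)-1).toNat = 0 by omega, Fc] at hL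
    split_ifs at hL with hc
    · omega
    · simp at hL
  obtain ⟨a, rfl⟩ : ∃ a : ℕ, i = (a:ℤ) + 2 := ⟨(i-2).toNat, by omega⟩
  obtain ⟨b, rfl⟩ : ∃ b : ℕ, j = (b:ℤ) := ⟨j.toNat, by omega⟩
  rw [fibCoeff_eq hL1 hL2 hL3, fibCoeff_eq (by omega) (by omega) hR3,
    fibCoeff_eq (by omega) (by omega) (by omega),
    show ((a:ℤ)+2-1).toNat = a+1 by omega,
    show ((a:ℤ)+2+1).toNat = a+3 by omega,
    show ((a:ℤ)+2).toNat = a+2 by omega,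
    show ((b:ℤ)).toNat = b by omega]
  have key : Fc N (a+1) b * Fc N (a+3) b ≤ Fc N (a+2) b ^ 2 := by
    simp only [Fc]
    have h1 : (a+1+b).choose b * (a+3+b).choose b ≤ ((a+2+b).choose b)^2 := by
      have := lc2 (a+1+b) b
      rw [show a+1+b+2 = a+3+b by omega, show a+1+b+1 = a+2+b by omega] at this
      exact this
    have h2 : (N-1-b).choose a * (N-1-b).choose (a+2) ≤ ((N-1-b).choose (a+1))^2 :=
      lc1 (N-1-b) a
    calc (a+1+b).choose b * (N-1-b).choose a * ((a+3+b).choose b * (N-1-b).choose (a+2))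
        = ((a+1+b).choose b * (a+3+b).choose b) * ((N-1-b).choose a * (N-1-b).choose (a+2)) := by
          ring
      _ ≤ ((a+2+b).choose b)^2 * ((N-1-b).choose (a+1))^2 := Nat.mul_le_mul h1 h2
      _ = ((a+2+b).choose b * (N-1-b).choose (a+1))^2 := by ring
  exact_mod_cast key

lemma part2 (N : ℕ) (i j : ℤ) :
    fibCoeff N i (j-1) * fibCoeff N i (j+1) ≤ fibCoeff N i j ^ 2 := by
  by_cases hL : fibCoeff N i (j-1) = 0
  · rw [hL, zero_mul]; exact sq_nonneg _
  by_cases hR : fibCoeff N i (j+1) = 0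
  · rw [hR, mul_zero]; exact sq_nonneg _
  obtain ⟨hL1, hL2, hL3⟩ := dom_of_ne hL
  obtain ⟨hR1, hR2, hR3⟩ := dom_of_ne hR
  have hi1 : 1 ≤ i := by
    by_contra h'
    have hi0 : i = 0 := by omega
    subst hi0
    rw [fibCoeff_eq hL1 hL2 hL3] at hL
    rw [fibCoeff_eq hR1 hR2 hR3] at hR
    simp only [show ((0:ℤ)).toNat = 0 by omega, Fc] at hL hR
    split_ifs at hL with hc1
    · split_ifs at hR with hc2
      · omega
      · simp at hR
    · simp at hL
  obtain ⟨a, rfl⟩ : ∃ a : ℕ, i = (a:ℤ) + 1 := ⟨(i-1).toNat, by omega⟩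
  obtain ⟨b, rfl⟩ : ∃ b : ℕ, j = (b:ℤ) + 1 := ⟨(j-1).toNat, by omega⟩
  obtain ⟨t, rfl⟩ : ∃ t : ℕ, N = a+b+3+t := ⟨N - (a+b+3), by omega⟩
  rw [fibCoeff_eq hL1 hL2 hL3, fibCoeff_eq (by omega) (by omega) hR3,
    fibCoeff_eq (by omega) (by omega) (by omega),
    show ((b:ℤ)+1-1).toNat = b by omega,
    show ((b:ℤ)+1+1).toNat = b+2 by omega,
    show ((b:ℤ)+1).toNat = b+1 by omega,
    show ((a:ℤ)+1).toNat = a+1 by omega]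
  have key : Fc (a+b+3+t) (a+1) b * Fc (a+b+3+t) (a+1) (b+2) ≤ Fc (a+b+3+t) (a+1) (b+1) ^ 2 := by
    simp only [Fc]
    rw [show a+b+3+t-1-b = (a+t)+2 by omega,
      show a+b+3+t-1-(b+2) = a+t by omega,
      show a+b+3+t-1-(b+1) = (a+t)+1 by omega,
      show a+1+b = b+(a+1) by omega, choose_flip b (a+1),
      show a+1+(b+2) = (b+2)+(a+1) by omega, choose_flip (b+2) (a+1),
      show a+1+(b+1) = (b+1)+(a+1) by omega, choose_flip (b+1) (a+1)]
    have h1 : (b+(a+1)).choose (a+1) * ((b+2)+(a+1)).choose (a+1)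
        ≤ (((b+1)+(a+1)).choose (a+1))^2 := by
      have := lc2 (b+(a+1)) (a+1)
      rw [show b+(a+1)+2 = (b+2)+(a+1) by omega,
        show b+(a+1)+1 = (b+1)+(a+1) by omega] at this
      exact this
    have h2 : (a+t).choose a * ((a+t)+2).choose a ≤ (((a+t)+1).choose a)^2 := lc2 (a+t) a
    calc (b+(a+1)).choose (a+1) * ((a+t)+2).choose a
          * (((b+2)+(a+1)).choose (a+1) * (a+t).choose a)
        = ((b+(a+1)).choose (a+1) * ((b+2)+(a+1)).choose (a+1))
          * ((a+t).choose a * ((a+t)+2).choose a) := by ring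
      _ ≤ (((b+1)+(a+1)).choose (a+1))^2 * ((((a+t)+1).choose a))^2 := Nat.mul_le_mul h1 h2
      _ = (((b+1)+(a+1)).choose (a+1) * ((a+t)+1).choose a)^2 := by ring
  exact_mod_cast key

lemma part3 (N : ℕ) (i j : ℤ) :
    fibCoeff N (i-1) (j+1) * fibCoeff N (i+1) (j-1) ≤ fibCoeff N i j ^ 2 := by
  by_cases hL : fibCoeff N (i-1) (j+1) = 0
  · rw [hL, zero_mul]; exact sq_nonneg _
  by_cases hR : fibCoeff N (i+1) (j-1) = 0
  · rw [hR, mul_zero]; exact sq_nonneg _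
  obtain ⟨hL1, hL2, hL3⟩ := dom_of_ne hL
  obtain ⟨hR1, hR2, hR3⟩ := dom_of_ne hR
  obtain ⟨a, rfl⟩ : ∃ a : ℕ, i = (a:ℤ) + 1 := ⟨(i-1).toNat, by omega⟩
  obtain ⟨b, rfl⟩ : ∃ b : ℕ, j = (b:ℤ) + 1 := ⟨(j-1).toNat, by omega⟩
  rcases a with _ | a
  · -- i = 1 : left neighbour is at column 0, so j+1 = N
    simp only [Nat.cast_zero] at hL hR hL1 hL2 hL3 hR1 hR2 hR3 ⊢
    have hbN : b + 2 = N := by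
      rw [fibCoeff_eq hL1 hL2 hL3] at hL
      simp only [show ((0:ℤ)+1-1).toNat = 0 by omega,
        show ((b:ℤ)+1+1).toNat = b+2 by omega, Fc] at hL
      split_ifs at hL with hc
      · omega
      · simp at hL
    subst hbN
    rw [fibCoeff_eq hL1 hL2 hL3, fibCoeff_eq hR1 hR2 hR3,
      fibCoeff_eq (by omega) (by omega) (by omega),
      show ((0:ℤ)+1-1).toNat = 0 by omega,
      show ((b:ℤ)+1+1).toNat = b+2 by omega,
      show ((0:ℤ)+1+1).toNat = 2 by omega,
      show ((b:ℤ)+1-1).toNat = b by omega,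
      show ((0:ℤ)+1).toNat = 1 by omega,
      show ((b:ℤ)+1).toNat = b+1 by omega]
    have key : Fc (b+2) 0 (b+2) * Fc (b+2) 2 b ≤ Fc (b+2) 1 (b+1) ^ 2 := by
      simp only [Fc, eq_self_iff_true, if_true, one_mul]
      rw [show b+2-1-b = 1 by omega, show b+2-1-(b+1) = 0 by omega,
        show (1:ℕ)+1+b = b+2 by omega, show (0:ℕ)+1+(b+1) = b+2 by omega]
      simp only [Nat.choose_self, Nat.choose_zero_right, mul_one, one_mul]
      -- goal : (b+2).choose b ≤ ((b+2).choose (b+1))^2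
      have c1 : (b+2).choose b = (b+2).choose 2 := by
        have := choose_flip b 2; rwa [show b+2 = b+2 from rfl] at this
      have c2 : (b+2).choose (b+1) = b+2 := by
        rw [show b+2 = (b+1)+1 by omega]; exact Nat.choose_succ_self_right (b+1)
      rw [c1, c2, Nat.choose_two_right]
      calc (b+2)*(b+2-1)/2 ≤ (b+2)*(b+2-1) := Nat.div_le_self _ _
        _ ≤ (b+2)*(b+2) := Nat.mul_le_mul_left _ (by omega)
        _ = (b+2)^2 := by ring
    exact_mod_cast key
  · -- generic diagonal case
    simp only [Nat.cast_add, Nat.cast_one] at hL hR hL1 hL2 hL3 hR1 hR2 hR3 ⊢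
    obtain ⟨t, rfl⟩ : ∃ t : ℕ, N = a+b+3+t := ⟨N - (a+b+3), by omega⟩
    rw [fibCoeff_eq hL1 hL2 hL3, fibCoeff_eq hR1 hR2 hR3,
      fibCoeff_eq (by omega) (by omega) (by omega),
      show ((a:ℤ)+1+1-1).toNat = a+1 by omega,
      show ((b:ℤ)+1+1).toNat = b+2 by omega,
      show ((a:ℤ)+1+1+1).toNat = a+3 by omega,
      show ((b:ℤ)+1-1).toNat = b by omega,
      show ((a:ℤ)+1+1).toNat = a+2 by omega,
      show ((b:ℤ)+1).toNat = b+1 by omega]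
    have key : Fc (a+b+3+t) (a+1) (b+2) * Fc (a+b+3+t) (a+3) b
        ≤ Fc (a+b+3+t) (a+2) (b+1) ^ 2 := by
      simp only [Fc]
      rw [show a+b+3+t-1-(b+2) = a+t by omega,
        show a+b+3+t-1-b = (a+t)+2 by omega,
        show a+b+3+t-1-(b+1) = (a+t)+1 by omega,
        show a+1+(b+2) = a+b+3 by omega,
        show a+2+1+b = a+b+3 by omega,
        show a+1+1+(b+1) = a+b+3 by omega]
      have h1 : (a+b+3).choose b * (a+b+3).choose (b+2) ≤ ((a+b+3).choose (b+1))^2 :=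
        lc1 (a+b+3) b
      have h2 : (a+t).choose a * ((a+t)+2).choose (a+2) ≤ (((a+t)+1).choose (a+1))^2 := by
        have := lc3 (a+t) a
        rwa [show a+t+2 = (a+t)+2 by omega, show a+t+1 = (a+t)+1 by omega] at this
      calc (a+b+3).choose (b+2) * (a+t).choose a
            * ((a+b+3).choose b * ((a+t)+2).choose (a+2))
          = ((a+b+3).choose b * (a+b+3).choose (b+2))
            * ((a+t).choose a * ((a+t)+2).choose (a+2)) := by ring
        _ ≤ ((a+b+3).choose (b+1))^2 * (((a+t)+1).choose (a+1))^2 := Nat.mul_le_mul h1 h2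
        _ = ((a+b+3).choose (b+1) * ((a+t)+1).choose (a+1))^2 := by ring
    exact_mod_cast key


theorem fibonacci_log_concave (n : ℕ) (i j : ℤ) :
    fibCoeff (n + 1) (i - 1) j * fibCoeff (n + 1) (i + 1) j ≤ fibCoeff (n + 1) i j ^ 2 ∧
    fibCoeff (n + 1) i (j - 1) * fibCoeff (n + 1) i (j + 1) ≤ fibCoeff (n + 1) i j ^ 2 ∧
    fibCoeff (n + 1) (i - 1) (j + 1) * fibCoeff (n + 1) (i + 1) (j - 1)
      ≤ fibCoeff (n + 1) i j ^ 2 :=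
  ⟨part1 (n+1) i j, part2 (n+1) i j, part3 (n+1) i j⟩
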